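/- Cone ℓ₂ bound: if Δ ∈ ℝ^p satisfies ‖Δ_{J^c}‖₁ ≤ 3‖Δ_J‖₁ where J has cardinality s ≥ 1 and J contains the s largest coordinates of Δ in absolute value, then ‖Δ‖₂ ≤ (√3 + 1)‖Δ_J‖₂. -/
import Mathlib


open Finset

/-- Euclidean norm of a finite vector. -/
noncomputable def l2norm {p : ℕ} (v : Fin p → ℝ) : ℝ :=
  Real.sqrt (∑ i, (v i) ^ 2)

/-- Restriction of a vector to a subset of coordinates (zero outside). -/
def restrict {p : ℕ} (v : Fin p → ℝ) (J : Finset (Fin p)) : Fin p → ℝ :=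
  fun i => if i ∈ J then v i else 0

/-- Cone ℓ₂ bound: if `‖Δ_{Jᶜ}‖₁ ≤ 3‖Δ_J‖₁` and `J` (of cardinality `s ≥ 1`)
contains the largest coordinates of `Δ` in absolute value, then
`‖Δ‖₂ ≤ (√3 + 1)‖Δ_J‖₂`. -/
theorem cone_l2_bound
    {p : ℕ} (Δ : Fin p → ℝ) (J : Finset (Fin p)) (hcard : 1 ≤ J.card)
    (hcone : ∑ i ∈ Jᶜ, |Δ i| ≤ 3 * ∑ i ∈ J, |Δ i|)
    (hlargest : ∀ i ∈ J, ∀ i' ∈ Jᶜ, |Δ i'| ≤ |Δ i|) :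
    l2norm Δ ≤ (Real.sqrt 3 + 1) * l2norm (restrict Δ J) := by
  set A := ∑ i ∈ J, (Δ i) ^ 2 with hA
  set B := ∑ i ∈ Jᶜ, (Δ i) ^ 2 with hB
  set L := ∑ i ∈ J, |Δ i| with hL
  have hApos : 0 ≤ A := Finset.sum_nonneg fun i _ => sq_nonneg _
  have hBpos : 0 ≤ B := Finset.sum_nonneg fun i _ => sq_nonneg _
  have hLpos : 0 ≤ L := Finset.sum_nonneg fun i _ => abs_nonneg _
  have hs : (1 : ℝ) ≤ (J.card : ℝ) := by exact_mod_cast hcard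
  -- each coordinate in Jᶜ satisfies s * |Δ i'| ≤ L
  have hinf : ∀ i' ∈ Jᶜ, (J.card : ℝ) * |Δ i'| ≤ L := by
    intro i' hi'
    have : ∑ i ∈ J, |Δ i'| ≤ ∑ i ∈ J, |Δ i| :=
      Finset.sum_le_sum fun i hi => hlargest i hi i' hi'
    simpa [Finset.sum_const, nsmul_eq_mul] using this
  -- s * B ≤ 3 * L * L
  have hsB : (J.card : ℝ) * B ≤ 3 * L * L := by
    have h1 : (J.card : ℝ) * B ≤ L * ∑ i ∈ Jᶜ, |Δ i| := by
      rw [hB, Finset.mul_sum, Finset.mul_sum]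
      refine Finset.sum_le_sum fun i hi => ?_
      have h2 : (J.card : ℝ) * |Δ i| ≤ L := hinf i hi
      calc (J.card : ℝ) * Δ i ^ 2 = ((J.card : ℝ) * |Δ i|) * |Δ i| := by
            rw [← sq_abs (Δ i)]; ring
        _ ≤ L * |Δ i| := mul_le_mul_of_nonneg_right h2 (abs_nonneg _)
    calc (J.card : ℝ) * B ≤ L * ∑ i ∈ Jᶜ, |Δ i| := h1
      _ ≤ L * (3 * L) := mul_le_mul_of_nonneg_left hcone hLpos
      _ = 3 * L * L := by ring
  -- Cauchy-Schwarz: L^2 ≤ s * A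
  have hCS : L ^ 2 ≤ (J.card : ℝ) * A := by
    have h := Finset.sum_mul_sq_le_sq_mul_sq J (fun _ => (1:ℝ)) (fun i => |Δ i|)
    simpa [hL, hA, Finset.sum_const, nsmul_eq_mul, sq_abs] using h
  -- B ≤ 3 * A
  have hB3A : B ≤ 3 * A := by
    have h : (J.card : ℝ) * B ≤ (J.card : ℝ) * (3 * A) := by
      calc (J.card : ℝ) * B ≤ 3 * L * L := hsB
        _ = 3 * L ^ 2 := by ring
        _ ≤ 3 * ((J.card : ℝ) * A) := by linarith
        _ = (J.card : ℝ) * (3 * A) := by ring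
    exact le_of_mul_le_mul_left h (by linarith)
  -- total sum
  have htot : ∑ i, (Δ i) ^ 2 = A + B := by
    rw [hA, hB, Finset.sum_add_sum_compl]
  have hrestrict : l2norm (restrict Δ J) = Real.sqrt A := by
    unfold l2norm _root_.restrict
    congr 1
    rw [← Finset.sum_add_sum_compl J]
    have h1 : ∑ i ∈ J, (if i ∈ J then Δ i else 0) ^ 2 = A :=
      Finset.sum_congr rfl fun i hi => by simp [hi]
    have h2 : ∑ i ∈ Jᶜ, (if i ∈ J then Δ i else 0) ^ 2 = 0 := by
      refine Finset.sum_eq_zero fun i hi => ?_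
      have : i ∉ J := Finset.mem_compl.mp hi
      simp [this]
    rw [h1, h2, add_zero]
  rw [hrestrict]
  unfold l2norm
  rw [htot]
  have h4 : A + B ≤ 4 * A := by linarith
  calc Real.sqrt (A + B) ≤ Real.sqrt (4 * A) := Real.sqrt_le_sqrt h4
    _ = 2 * Real.sqrt A := by
        rw [show (4:ℝ) * A = 2 ^ 2 * A by ring, Real.sqrt_mul (by positivity),
          Real.sqrt_sq (by norm_num)]
    _ ≤ (Real.sqrt 3 + 1) * Real.sqrt A := by
        have h3 : (1:ℝ) ≤ Real.sqrt 3 := by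
          rw [show (1:ℝ) = Real.sqrt 1 by simp]
          exact Real.sqrt_le_sqrt (by norm_num)
        have : (2:ℝ) ≤ Real.sqrt 3 + 1 := by linarith
        exact mul_le_mul_of_nonneg_right this (Real.sqrt_nonneg _)
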